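/- Let X, Z be indecomposable complexes in C_{η+2}(proj Λ) and let δ: X → Y → Z be an almost split sequence in C_{η+2}(proj Λ). If X^1 = 0, Y^1 = 0 and Z^1 = 0, then *[δ]: *[X] → *[Y] → *[Z] is an almost split sequence in C_{η+1}(proj Λ). -/

import Mathlib

open CategoryTheory CategoryTheory.Limits ZeroObject

noncomputable section

namespace Paper

/-- The ambient category: cochain complexes of right `Λ`-modules indexed by `ℤ`. -/
abbrev Amb (Λ : Type) [Ring Λ] := CochainComplex (ModuleCat.{0} Λᵐᵒᵖ) ℤ

variable {Λ : Type} [Ring Λ]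

/-- All cells are finitely generated projective right `Λ`-modules. -/
def ProjCells (X : Amb Λ) : Prop :=
  ∀ i : ℤ, Module.Finite Λᵐᵒᵖ (X.X i) ∧ Module.Projective Λᵐᵒᵖ (X.X i)

/-- The complex is supported in the window `[a, b]`. -/
def Supp (a b : ℤ) (X : Amb Λ) : Prop :=
  ∀ i : ℤ, (i < a ∨ b < i) → IsZero (X.X i)

/-- Object of the category `C_{[a,b]}(proj Λ)` of complexes of finitely generated
projective modules concentrated in the window `[a, b]`.  (The category
`C_n(proj Λ)` of the paper corresponds to the window `[1, n]`; a window `[a, b]`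
corresponds to `C_{b-a+1}(proj Λ)` after the canonical reindexing.) -/
def InC (a b : ℤ) (X : Amb Λ) : Prop := Supp a b X ∧ ProjCells X

def IsSect {X Y : Amb Λ} (f : X ⟶ Y) : Prop := ∃ h : Y ⟶ X, f ≫ h = 𝟙 X

def IsRetr {X Y : Amb Λ} (f : X ⟶ Y) : Prop := ∃ h : Y ⟶ X, h ≫ f = 𝟙 Y

/-- `f` is irreducible in `C_{[a,b]}(proj Λ)`. -/
def Irred (a b : ℤ) {X Y : Amb Λ} (f : X ⟶ Y) : Prop :=
  ¬ IsSect f ∧ ¬ IsRetr f ∧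
    ∀ (W : Amb Λ), InC a b W → ∀ (g : X ⟶ W) (h : W ⟶ Y),
      g ≫ h = f → IsRetr h ∨ IsSect g

/-- Indecomposable complex. -/
def Indec (X : Amb Λ) : Prop :=
  ¬ IsZero X ∧ ∀ (A B : Amb Λ), (X ≅ A ⊞ B) → IsZero A ∨ IsZero B

/-- A conflation: in every degree a split short exact sequence. -/
def DegSplit {X Y Z : Amb Λ} (f : X ⟶ Y) (g : Y ⟶ Z) : Prop :=
  ∀ j : ℤ, ∃ w : f.f j ≫ g.f j = 0,
    Nonempty (ShortComplex.mk (f.f j) (g.f j) w).Splitting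

/-- Minimal left almost split morphism in `C_{[a,b]}(proj Λ)`. -/
def MinLeftAS (a b : ℤ) {X Y : Amb Λ} (f : X ⟶ Y) : Prop :=
  ¬ IsSect f ∧
    (∀ (W : Amb Λ), InC a b W → ∀ u : X ⟶ W, ¬ IsSect u → ∃ v : Y ⟶ W, f ≫ v = u) ∧
    (∀ u : Y ⟶ Y, f ≫ u = f → IsIso u)

/-- Minimal right almost split morphism in `C_{[a,b]}(proj Λ)`. -/
def MinRightAS (a b : ℤ) {Y Z : Amb Λ} (g : Y ⟶ Z) : Prop :=
  ¬ IsRetr g ∧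
    (∀ (W : Amb Λ), InC a b W → ∀ u : W ⟶ Z, ¬ IsRetr u → ∃ v : W ⟶ Y, v ≫ g = u) ∧
    (∀ u : Y ⟶ Y, u ≫ g = g → IsIso u)

/-- Almost split sequence in `C_{[a,b]}(proj Λ)`. -/
def AlmostSplit (a b : ℤ) {X Y Z : Amb Λ} (f : X ⟶ Y) (g : Y ⟶ Z) : Prop :=
  DegSplit f g ∧ MinLeftAS a b f ∧ MinRightAS a b g

/-- `X` (supported in a window starting at `a`) can be extended to the left. -/
def ExtLeft (a : ℤ) (X : Amb Λ) : Prop :=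
  ∃ P : ModuleCat.{0} Λᵐᵒᵖ, Module.Finite Λᵐᵒᵖ P ∧ Module.Projective Λᵐᵒᵖ P ∧
    ∃ δ : P ⟶ X.X a, δ ≠ 0 ∧ δ ≫ X.d a (a + 1) = 0

/-- `X` (supported in a window ending at `b`) can be extended to the right. -/
def ExtRight (b : ℤ) (X : Amb Λ) : Prop :=
  ∃ P : ModuleCat.{0} Λᵐᵒᵖ, Module.Finite Λᵐᵒᵖ P ∧ Module.Projective Λᵐᵒᵖ P ∧
    ∃ δ : X.X b ⟶ P, δ ≠ 0 ∧ X.d (b - 1) b ≫ δ = 0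

/-- Bounded complex. -/
def BddCplx (X : Amb Λ) : Prop := ∃ a b : ℤ, Supp a b X

/-- Contractible complex, i.e. zero in the homotopy category. -/
def Contractible (X : Amb Λ) : Prop := Nonempty (Homotopy (𝟙 X) 0)

/-- Indecomposable nonzero object of `K^b(proj Λ)`. -/
def HIndec (X : Amb Λ) : Prop :=
  ¬ Contractible X ∧
    ∀ (A B : Amb Λ), ProjCells A → BddCplx A → ProjCells B → BddCplx B →
      Nonempty (HomotopyEquiv X (A ⊞ B)) → Contractible A ∨ Contractible B

/-- The candidate lengths of `X` as an object of `K^b(proj Λ)`. -/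
def lenSet (X : Amb Λ) : Set ℕ :=
  {d | ∃ (Y : Amb Λ) (r s : ℤ), r ≤ s ∧ Nonempty (HomotopyEquiv X Y) ∧
        ProjCells Y ∧ Supp r s Y ∧ d = (s - r).toNat}

/-- `ℓ(X)`. -/
def len (X : Amb Λ) : ℕ := sInf (lenSet X)

/-- `η` is the strong global dimension of `Λ`. -/
def IsSGdim (Λ : Type) [Ring Λ] (η : ℕ) : Prop :=
  IsGreatest {d : ℕ | ∃ X : Amb Λ, ProjCells X ∧ BddCplx X ∧ HIndec X ∧ len X = d} η

/-- Brutal truncation of a complex to the set of degrees satisfying `P`. -/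
def chop (P : ℤ → Prop) [DecidablePred P] (X : Amb Λ) : Amb Λ where
  X i := if P i then X.X i else 0
  d i j :=
    if hi : P i then
      if hj : P j then
        eqToHom (if_pos hi) ≫ X.d i j ≫ eqToHom (if_pos hj).symm
      else 0
    else 0
  shape i j h := by
    by_cases hi : P i
    · by_cases hj : P j
      · simp [hi, hj, X.shape i j h]
      · simp [hi, hj]
    · simp [hi]
  d_comp_d' i j k hij hjk := by
    by_cases hi : P i <;> by_cases hj : P j <;> by_cases hk : P k <;>
      simp [hi, hj, hk]

/-- Brutal truncation of a chain map. -/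
def chopMap (P : ℤ → Prop) [DecidablePred P] {X Y : Amb Λ} (f : X ⟶ Y) :
    chop P X ⟶ chop P Y where
  f i :=
    if h : P i then eqToHom (if_pos h) ≫ f.f i ≫ eqToHom (if_pos h).symm
    else 0
  comm' i j hij := by
    by_cases hi : P i <;> by_cases hj : P j <;>
      simp [chop, hi, hj] <;> erw [Limits.zero_comp] <;> erw [Limits.comp_zero]

/-- `E_{[a,b]}`-projective complex (lifting against proper epimorphisms). -/
def EProj (a b : ℤ) (P : Amb Λ) : Prop :=
  ∀ (W₁ W₂ : Amb Λ), InC a b W₁ → InC a b W₂ → ∀ v : W₁ ⟶ W₂,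
    (∀ j : ℤ, Epi (v.f j)) → ∀ f : P ⟶ W₂, ∃ g : P ⟶ W₁, g ≫ v = f

/-- `E_{[a,b]}`-injective complex (extending along proper monomorphisms). -/
def EInj (a b : ℤ) (I : Amb Λ) : Prop :=
  ∀ (W₁ W₂ : Amb Λ), InC a b W₁ → InC a b W₂ → ∀ v : W₁ ⟶ W₂,
    (∀ j : ℤ, Mono (v.f j)) → ∀ f : W₁ ⟶ I, ∃ g : W₂ ⟶ I, v ≫ g = f

/-!
Since the first cells of `X`, `Y`, `Z` vanish, brutal truncation at degree `2` is isomorphic to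
the identity on them, and every complex concentrated in `[2, η + 2]` is also concentrated in
`[1, η + 2]`. Each defining property of an almost split sequence is invariant under isomorphisms
of its terms and survives shrinking the class of test complexes, so `*[δ]` is almost split.
-/

lemma isIso_of_isIso_conj {C : Type*} [Category C] {A B : C} (e : A ≅ B) (u : A ⟶ A)
    (h : IsIso (e.inv ≫ u ≫ e.hom)) : IsIso u := by
  rw [show u = e.hom ≫ (e.inv ≫ u ≫ e.hom) ≫ e.inv by simp]
  infer_instance

section IsSectIsRetr

variable {A X Y : Amb Λ}

lemma isSect_isIso_comp_iff (i : A ⟶ X) [IsIso i] (f : X ⟶ Y) :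
    IsSect (i ≫ f) ↔ IsSect f := by
  constructor
  · rintro ⟨h, hh⟩
    exact ⟨h ≫ i, by simpa using congrArg (fun t => inv i ≫ t ≫ i) hh⟩
  · rintro ⟨h, hh⟩
    exact ⟨h ≫ inv i, by simp [reassoc_of% hh]⟩

lemma isSect_comp_isIso_iff (f : X ⟶ Y) (i : Y ⟶ A) [IsIso i] :
    IsSect (f ≫ i) ↔ IsSect f :=
  ⟨fun ⟨h, hh⟩ => ⟨i ≫ h, by simpa using hh⟩,
    fun ⟨h, hh⟩ => ⟨inv i ≫ h, by simpa using hh⟩⟩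

lemma isRetr_isIso_comp_iff (i : A ⟶ X) [IsIso i] (f : X ⟶ Y) :
    IsRetr (i ≫ f) ↔ IsRetr f :=
  ⟨fun ⟨h, hh⟩ => ⟨h ≫ i, by simpa using hh⟩,
    fun ⟨h, hh⟩ => ⟨h ≫ inv i, by simpa using hh⟩⟩

lemma isRetr_comp_isIso_iff (f : X ⟶ Y) (i : Y ⟶ A) [IsIso i] :
    IsRetr (f ≫ i) ↔ IsRetr f := by
  constructor
  · rintro ⟨h, hh⟩
    exact ⟨i ≫ h, by simpa using congrArg (fun t => i ≫ t ≫ inv i) hh⟩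
  · rintro ⟨h, hh⟩
    exact ⟨inv i ≫ h, by simp [reassoc_of% hh]⟩

end IsSectIsRetr

section Transport

variable {a b : ℤ} {X Y Z X' Y' Z' : Amb Λ}

lemma DegSplit.conj_iso {f : X ⟶ Y} {g : Y ⟶ Z} (h : DegSplit f g)
    (eX : X' ≅ X) (eY : Y' ≅ Y) (eZ : Z' ≅ Z) :
    DegSplit (eX.hom ≫ f ≫ eY.inv) (eY.hom ≫ g ≫ eZ.inv) := by
  intro j
  obtain ⟨w, ⟨s⟩⟩ := h j
  have w' : (eX.hom ≫ f ≫ eY.inv).f j ≫ (eY.hom ≫ g ≫ eZ.inv).f j = 0 := by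
    rw [← HomologicalComplex.comp_f]
    simp [reassoc_of% w]
  refine ⟨w', ⟨s.ofIso (ShortComplex.isoMk (HomologicalComplex.Hom.isoApp eX.symm j)
    (HomologicalComplex.Hom.isoApp eY.symm j) (HomologicalComplex.Hom.isoApp eZ.symm j)
    ?_ ?_)⟩⟩ <;> simp [HomologicalComplex.Hom.isoApp]

lemma MinLeftAS.conj_iso {f : X ⟶ Y} (h : MinLeftAS a b f) (eX : X' ≅ X) (eY : Y' ≅ Y) :
    MinLeftAS a b (eX.hom ≫ f ≫ eY.inv) := by
  obtain ⟨hNotSect, hFactor, hMin⟩ := h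
  refine ⟨?_, fun W hW u hu => ?_, fun u hu => ?_⟩
  · rwa [isSect_isIso_comp_iff, isSect_comp_isIso_iff]
  · obtain ⟨v, hv⟩ := hFactor W hW (eX.inv ≫ u) (by rwa [isSect_isIso_comp_iff])
    exact ⟨eY.hom ≫ v, by simp [hv]⟩
  · exact isIso_of_isIso_conj eY u
      (hMin _ (by simpa using congrArg (fun t => eX.inv ≫ t ≫ eY.hom) hu))

lemma MinRightAS.conj_iso {g : Y ⟶ Z} (h : MinRightAS a b g) (eY : Y' ≅ Y) (eZ : Z' ≅ Z) :
    MinRightAS a b (eY.hom ≫ g ≫ eZ.inv) := by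
  obtain ⟨hNotRetr, hFactor, hMin⟩ := h
  refine ⟨?_, fun W hW u hu => ?_, fun u hu => ?_⟩
  · rwa [isRetr_isIso_comp_iff, isRetr_comp_isIso_iff]
  · obtain ⟨v, hv⟩ := hFactor W hW (u ≫ eZ.hom) (by rwa [isRetr_comp_isIso_iff])
    exact ⟨v ≫ eY.inv, by simp [reassoc_of% hv]⟩
  · exact isIso_of_isIso_conj eY u
      (hMin _ (by simpa using congrArg (fun t => eY.inv ≫ t ≫ eZ.hom) hu))

lemma AlmostSplit.conj_iso {f : X ⟶ Y} {g : Y ⟶ Z} (h : AlmostSplit a b f g)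
    (eX : X' ≅ X) (eY : Y' ≅ Y) (eZ : Z' ≅ Z) :
    AlmostSplit a b (eX.hom ≫ f ≫ eY.inv) (eY.hom ≫ g ≫ eZ.inv) :=
  ⟨h.1.conj_iso eX eY eZ, h.2.1.conj_iso eX eY, h.2.2.conj_iso eY eZ⟩

lemma AlmostSplit.of_window_subset {a' b' : ℤ} {f : X ⟶ Y} {g : Y ⟶ Z}
    (h : AlmostSplit a b f g) (hWin : ∀ W : Amb Λ, InC a' b' W → InC a b W) :
    AlmostSplit a' b' f g :=
  ⟨h.1, ⟨h.2.1.1, fun W hW => h.2.1.2.1 W (hWin W hW), h.2.1.2.2⟩,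
    ⟨h.2.2.1, fun W hW => h.2.2.2.1 W (hWin W hW), h.2.2.2.2⟩⟩

lemma InC.mono {a' b' : ℤ} {W : Amb Λ} (h : InC a' b' W) (ha : a ≤ a') (hb : b' ≤ b) :
    InC a b W :=
  ⟨fun i hi => h.1 i (by omega), h.2⟩

end Transport

section Chop

variable (P : ℤ → Prop) [DecidablePred P]

lemma isZero_chop_X (X : Amb Λ) {i : ℤ} (h : ¬ P i) : IsZero ((chop P X).X i) :=
  IsZero.of_iso (isZero_zero _) (eqToIso (if_neg h))

def chopIso (X : Amb Λ) (hX : ∀ i, ¬ P i → IsZero (X.X i)) : chop P X ≅ X :=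
  HomologicalComplex.Hom.isoOfComponents
    (fun i => if h : P i then eqToIso (if_pos h) else (isZero_chop_X P X h).iso (hX i h))
    (fun i j _ => by
      by_cases hi : P i
      · by_cases hj : P j
        · simp [chop, hi, hj]
        · exact (hX j hj).eq_of_tgt _ _
      · exact (isZero_chop_X P X hi).eq_of_src _ _)

lemma chopMap_eq_conj {X Y : Amb Λ} (f : X ⟶ Y)
    (hX : ∀ i, ¬ P i → IsZero (X.X i)) (hY : ∀ i, ¬ P i → IsZero (Y.X i)) :
    chopMap P f = (chopIso P X hX).hom ≫ f ≫ (chopIso P Y hY).inv := by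
  refine HomologicalComplex.hom_ext _ _ fun i => ?_
  by_cases hi : P i
  · simp [chopMap, chopIso, hi]
    rfl
  · exact (isZero_chop_X P X hi).eq_of_src _ _

lemma AlmostSplit.chopMap {a b : ℤ} {X Y Z : Amb Λ} {f : X ⟶ Y} {g : Y ⟶ Z}
    (h : AlmostSplit a b f g) (hX : ∀ i, ¬ P i → IsZero (X.X i))
    (hY : ∀ i, ¬ P i → IsZero (Y.X i)) (hZ : ∀ i, ¬ P i → IsZero (Z.X i)) :
    AlmostSplit a b (chopMap P f) (chopMap P g) := by
  rw [chopMap_eq_conj P f hX hY, chopMap_eq_conj P g hY hZ]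
  exact h.conj_iso _ _ _

end Chop

lemma isZero_X_of_lt_succ {a b : ℤ} {W : Amb Λ} (hW : InC a b W) (ha : IsZero (W.X a)) :
    ∀ i, ¬ a + 1 ≤ i → IsZero (W.X i) := by
  intro i hi
  obtain rfl | hne := eq_or_ne i a
  · exact ha
  · exact hW.1 i (Or.inl (by omega))

theorem statement7_general
    (Λ : Type) [Ring Λ]
    (η : ℕ)
    (X Y Z : Amb Λ) (hX : InC 1 ((η : ℤ) + 2) X) (hY : InC 1 ((η : ℤ) + 2) Y)
    (hZ : InC 1 ((η : ℤ) + 2) Z)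
    (f : X ⟶ Y) (g : Y ⟶ Z) (hδ : AlmostSplit 1 ((η : ℤ) + 2) f g)
    (h1 : IsZero (X.X 1)) (h2 : IsZero (Y.X 1)) (h3 : IsZero (Z.X 1)) :
    AlmostSplit 2 ((η : ℤ) + 2)
      (chopMap (fun i => 2 ≤ i) f) (chopMap (fun i => 2 ≤ i) g) :=
  (hδ.chopMap _ (isZero_X_of_lt_succ hX h1) (isZero_X_of_lt_succ hY h2)
    (isZero_X_of_lt_succ hZ h3)).of_window_subset fun _ hW => hW.mono (by norm_num) le_rfl

theorem statement7 (K : Type) [Field K] [IsAlgClosed K]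
    (Λ : Type) [Ring Λ] [Algebra K Λ] [FiniteDimensional K Λ]
    (η : ℕ) (hη : 1 ≤ η) (hsgd : IsSGdim Λ η)
    (X Y Z : Amb Λ) (hX : InC 1 ((η : ℤ) + 2) X) (hY : InC 1 ((η : ℤ) + 2) Y)
    (hZ : InC 1 ((η : ℤ) + 2) Z) (hIX : Indec X) (hIZ : Indec Z)
    (f : X ⟶ Y) (g : Y ⟶ Z) (hδ : AlmostSplit 1 ((η : ℤ) + 2) f g)
    (h1 : IsZero (X.X 1)) (h2 : IsZero (Y.X 1)) (h3 : IsZero (Z.X 1)) :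
    AlmostSplit 2 ((η : ℤ) + 2)
      (chopMap (fun i => 2 ≤ i) f) (chopMap (fun i => 2 ≤ i) g) :=
  statement7_general Λ η X Y Z hX hY hZ f g hδ h1 h2 h3

end Paper
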